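/- arXiv:1306.2054 — 4 statements merged into one kernel-verified Lean document; each statement's English description precedes it below -/
import Mathlib

section
/- Let ω = w₁…w_m be a finite word over {0,1} with w₁ = 1 and w_m = 1, identified with the sequence ω0^∞ ∈ Σ₂. Then the symmetric subshift Σ_ω is a subshift of finite type: there exists a finite set F of words over {0,1}, all of the same length, such that Σ_ω = {x ∈ Σ₂ : no word of F occurs in x}. -/
open Filter Topology

namespace Paper

/-- One-sided infinite binary sequences (indexed from 0): the space Σ₂. -/
abbrev Seq := ℕ → Bool

/-- The one-sided shift map σ. -/
def shift (x : Seq) : Seq := fun i => x (i + 1)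

/-- The mirror image x̄ of a sequence. -/
def mirror (x : Seq) : Seq := fun i => !x i

/-- Strict lexicographic order: x ≺ y iff x k < y k at the first index k where they differ. -/
def lexLt (x y : Seq) : Prop := ∃ k, (∀ i < k, x i = y i) ∧ x k < y k

/-- Non-strict lexicographic order. -/
def lexLe (x y : Seq) : Prop := lexLt x y ∨ x = y

/-- The symmetric subshift Σ_a = {x : ā ≺ σⁿ x ≺ a for all n ≥ 0}. -/
def SigmaA (a : Seq) : Set Seq :=
  {x | ∀ n : ℕ, lexLt (mirror a) (shift^[n] x) ∧ lexLt (shift^[n] x) a}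

/-- A finite word identified with the sequence ω0^∞. -/
def wordSeq (w : List Bool) : Seq := fun i => w.getD i false

/-- The word w occurs in the sequence x. -/
def occursIn (w : List Bool) (x : Seq) : Prop :=
  ∃ i, ∀ j < w.length, x (i + j) = w.getD j false

/-- B_n(Σ): admissible words of length n. -/
def Bword (S : Set Seq) (n : ℕ) : Set (List Bool) :=
  {w | w.length = n ∧ ∃ x ∈ S, occursIn w x}

/-- The language L(Σ) = ⋃_{n ≥ 1} B_n(Σ). -/
def lang (S : Set Seq) : Set (List Bool) :=
  {w | 1 ≤ w.length ∧ ∃ x ∈ S, occursIn w x}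

/-- Transitivity: every ordered pair of admissible words can be bridged. -/
def IsTransitiveShift (S : Set Seq) : Prop :=
  ∀ u ∈ lang S, ∀ v ∈ lang S, ∃ w : List Bool, (u ++ w ++ v) ∈ lang S

/-- Specification: bridges can be chosen of a fixed length m. -/
def HasSpecification (S : Set Seq) : Prop :=
  ∃ m : ℕ, ∀ u ∈ lang S, ∀ v ∈ lang S,
    ∃ w : List Bool, w.length = m ∧ (u ++ w ++ v) ∈ lang S

/-- Subshift of finite type: defined by a finite set of forbidden words of equal length. -/
def IsSFT (S : Set Seq) : Prop :=
  ∃ (F : Finset (List Bool)) (n : ℕ), (∀ w ∈ F, w.length = n) ∧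
    S = {x : Seq | ∀ w ∈ F, ¬ occursIn w x}

/-- ω''' = w₁…w_m (w̄₁…w̄_{m-1}1)^∞, with the convention 1''' = 1(01)^∞. -/
def triple (w : List Bool) : Seq :=
  if w.length ≤ 1 then fun i => decide (i % 2 = 0)
  else fun i =>
    if i < w.length then w.getD i false
    else if (i - w.length) % w.length = w.length - 1 then true
    else !(w.getD ((i - w.length) % w.length) false)

/-- The Thue–Morse sequence t (t 0 = 0, 0-indexed). -/
def thueMorse (n : ℕ) : Bool := decide (((Nat.digits 2 n).count 1) % 2 = 1)

/-- a* = σ(Thue–Morse sequence) = 1101001100101101… . -/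
def astar : Seq := fun i => thueMorse (i + 1)

/-- ω_{a*,k}: the word formed by the first 2^k digits of a*. -/
def astarWord (k : ℕ) : List Bool := List.ofFn fun j : Fin (2 ^ k) => astar j

/-- a is an i-sequence. -/
def IsISequence (i : ℕ) (a : Seq) : Prop :=
  if i = 0 then lexLt (triple (astarWord 1)) a ∧ lexLt a (fun _ => true)
  else lexLt (triple (astarWord (i + 1))) a ∧ lexLe a (triple (astarWord i))

/-- i-irreducible word (indices of letters are 1-based, as in the paper). -/
def IIrreducible (i : ℕ) (w : List Bool) : Prop :=
  w ≠ [] ∧ w.getLast? = some true ∧ IsISequence i (wordSeq w) ∧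
    ∀ j, 2 ^ i < j → j < w.length → w.getD (j - 1) false = true →
      lexLt (triple (w.take j)) (wordSeq w)

/-- Irreducible word. -/
def IrredWord (w : List Bool) : Prop :=
  w ≠ [] ∧ w.getD 0 false = true ∧ w.getLast? = some true ∧
    ∀ k, 1 ≤ k → k < w.length → w.getD (k - 1) false = true →
      lexLt (triple (w.take k)) (wordSeq w)

/-- Topological entropy h_top(Σ) = lim (1/n) log₂ |B_n(Σ)| (stated via limsup;
the limit exists by subadditivity, so this agrees with the limit). -/
noncomputable def htop (S : Set Seq) : ℝ :=
  Filter.limsup (fun n : ℕ => Real.logb 2 ((Bword S n).ncard) / (n : ℝ)) Filter.atTop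

/-- The sequence (10)^∞. -/
def tenSeq : Seq := fun i => decide (i % 2 = 0)

/-- The sequence 11(01)^∞. -/
def oneoneSeq : Seq := fun i => decide (i = 0 ∨ i % 2 = 1)

/-- Complete invariance of A inside S: σ(A) = A = σ⁻¹(A) ∩ S. -/
def CompletelyInvariant (S A : Set Seq) : Prop :=
  shift '' A = A ∧ shift ⁻¹' A ∩ S = A

/-- Transitive component of a subshift S. -/
def IsTransitiveComponent (S A : Set Seq) : Prop :=
  A ⊆ S ∧ IsClosed A ∧ CompletelyInvariant S A ∧ IsTransitiveShift A ∧
    ∀ A' : Set Seq, A' ⊆ S → IsClosed A' → CompletelyInvariant S A' →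
      (∃ x ∈ A', A' ⊆ closure (Set.range fun n => shift^[n] x)) → ¬A ⊂ A'

/-- The exceptional set 𝓔: parameters a ≻ a* lying in no interval (ω0^∞, ω''')
for any i-irreducible word ω. -/
def exceptionalSet : Set Seq :=
  {a | lexLt astar a ∧ ∀ (i : ℕ) (ω : List Bool), IIrreducible i ω →
    ¬(lexLt (wordSeq ω) a ∧ lexLt a (triple ω))}

lemma shift_iter (n : ℕ) (x : Seq) (i : ℕ) : shift^[n] x i = x (n + i) := by
  induction n generalizing x i with
  | zero => simp
  | succ n ih =>
    rw [Function.iterate_succ_apply, ih]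
    simp only [shift]
    congr 1
    omega

lemma getD_lt_length {w : List Bool} {k : ℕ} (h : w.getD k false = true) : k < w.length := by
  by_contra hk
  rw [List.getD_eq_default _ _ (by omega)] at h
  exact Bool.false_ne_true h

/-- the symmetric subshift of a finite word (starting and ending in 1)
is a subshift of finite type. -/
theorem statement0 (w : List Bool) (hne : w ≠ [])
    (hfirst : w.getD 0 false = true) (hlast : w.getLast? = some true) :
    IsSFT (SigmaA (wordSeq w)) := by
  classical
  set m := w.length with hm
  set a := wordSeq w with ha
  have ha_app : ∀ i, a i = w.getD i false := fun i => rfl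
  have hma : ∀ i, mirror a i = !(w.getD i false) := fun i => rfl
  let Good : List Bool → Prop := fun v =>
    (∃ k, (∀ i < k, v.getD i false = !(w.getD i false)) ∧
      (!(w.getD k false)) < v.getD k false) ∧
    (∃ k, (∀ i < k, v.getD i false = w.getD i false) ∧
      v.getD k false < w.getD k false)
  let F : Finset (List Bool) :=
    ((Finset.univ : Finset (Fin m → Bool)).image List.ofFn).filter (fun v => ¬ Good v)
  have hlenF : ∀ v ∈ F, v.length = m := by
    intro v hv
    rcases Finset.mem_image.1 (Finset.mem_filter.1 hv).1 with ⟨f, -, rfl⟩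
    simp
  refine ⟨F, m, hlenF, ?_⟩
  ext x
  simp only [SigmaA, Set.mem_setOf_eq]
  constructor
  · intro hx v hv hocc
    have hvlen : v.length = m := hlenF v hv
    have hGood : ¬ Good v := (Finset.mem_filter.1 hv).2
    rcases hocc with ⟨n, hn⟩
    obtain ⟨⟨k₁, hk₁pre, hk₁⟩, ⟨k₂, hk₂pre, hk₂⟩⟩ := hx n
    apply hGood
    constructor
    · -- mirror a ≺ σⁿ x gives first conjunct
      have hk₁' := Bool.lt_iff.1 hk₁
      have hwk : w.getD k₁ false = true := by
        have := hk₁'.1; rw [hma] at this; simpa using this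
      have hk₁m : k₁ < m := getD_lt_length hwk
      refine ⟨k₁, ?_, ?_⟩
      · intro i hi
        have h1 := hk₁pre i hi
        rw [hma i, shift_iter] at h1
        rw [← hn i (by omega)]
        exact h1.symm
      · have hv1 : v.getD k₁ false = true := by
          have := hk₁'.2
          rw [shift_iter] at this
          rw [← hn k₁ (by omega)]; exact this
        rw [hv1, hwk]
        simp [Bool.lt_iff]
    · have hk₂' : shift^[n] x k₂ = false ∧ a k₂ = true := Bool.lt_iff.1 hk₂
      have hwk : w.getD k₂ false = true := by rw [← ha_app]; exact hk₂'.2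
      have hk₂m : k₂ < m := getD_lt_length hwk
      refine ⟨k₂, ?_, ?_⟩
      · intro i hi
        have h1 := hk₂pre i hi
        rw [shift_iter, ha_app] at h1
        rw [← hn i (by omega)]
        exact h1
      · have hv0 : v.getD k₂ false = false := by
          have := hk₂'.1
          rw [shift_iter] at this
          rw [← hn k₂ (by omega)]; exact this
        rw [hv0, hwk]
        simp [Bool.lt_iff]
  · intro hx n
    set v : List Bool := List.ofFn (fun j : Fin m => x (n + j)) with hv
    have hvlen : v.length = m := by simp [hv]
    have hvget : ∀ j < m, v.getD j false = x (n + j) := by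
      intro j hj
      rw [List.getD_eq_getElem _ _ (by omega)]
      simp [hv]
    have hGood : Good v := by
      by_contra hg
      have hvF : v ∈ F := by
        refine Finset.mem_filter.2 ⟨Finset.mem_image.2 ⟨_, Finset.mem_univ _, rfl⟩, hg⟩
      exact hx v hvF ⟨n, fun j hj => (hvget j (by omega)).symm⟩
    obtain ⟨⟨k₁, hk₁pre, hk₁⟩, ⟨k₂, hk₂pre, hk₂⟩⟩ := hGood
    constructor
    · have hk₁' := Bool.lt_iff.1 hk₁
      have hwk : w.getD k₁ false = true := by have := hk₁'.1; simpa using this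
      have hk₁m : k₁ < m := getD_lt_length hwk
      refine ⟨k₁, ?_, ?_⟩
      · intro i hi
        rw [shift_iter, hma i, ← hk₁pre i hi, hvget i (by omega)]
      · rw [shift_iter, hma k₁, hwk, ← hvget k₁ (by omega), hk₁'.2]
        simp [Bool.lt_iff]
    · have hk₂' : v.getD k₂ false = false ∧ w.getD k₂ false = true :=
        Bool.lt_iff.1 hk₂
      have hk₂m : k₂ < m := getD_lt_length hk₂'.2
      refine ⟨k₂, ?_, ?_⟩
      · intro i hi
        rw [shift_iter, ha_app, ← hk₂pre i hi, hvget i (by omega)]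
      · rw [shift_iter, ha_app, hk₂'.2, ← hvget k₂ (by omega), hk₂'.1]
        simp [Bool.lt_iff]

end Paper
end

section
/- Let n ≥ 2 and let a ∈ Σ₂ satisfy 1^n0^∞ ≺ a ⪯ 1^{n+1}0^∞ in the lexicographic order. Then for every x ∈ Σ_a, neither the word 0^{n+1} nor the word 1^{n+1} occurs in x. -/
open Filter Topology

namespace Paper

lemma shift_iterate (x : Seq) (i k : ℕ) : (shift^[i] x) k = x (i + k) := by
  induction i generalizing x k with
  | zero => simp
  | succ m ih =>
    rw [Function.iterate_succ_apply, ih]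
    simp [shift, Nat.add_comm, Nat.add_assoc, Nat.add_left_comm]

lemma lexLt_trans {x y z : Seq} (h1 : lexLt x y) (h2 : lexLt y z) : lexLt x z := by
  obtain ⟨k, hk, hk'⟩ := h1
  obtain ⟨l, hl, hl'⟩ := h2
  rcases lt_trichotomy k l with h | h | h
  · exact ⟨k, fun i hi => (hk i hi).trans (hl i (hi.trans h)), by rw [← hl k h]; exact hk'⟩
  · subst h
    revert hk' hl'
    cases hx : x k <;> cases hy : y k <;> cases hz : z k <;> simp
  · exact ⟨l, fun i hi => (hk i (hi.trans h)).trans (hl i hi), by rw [hk l h]; exact hl'⟩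

lemma lexLt_of_lexLt_of_lexLe {x y z : Seq} (h1 : lexLt x y) (h2 : lexLe y z) :
    lexLt x z := by
  rcases h2 with h2 | rfl
  · exact lexLt_trans h1 h2
  · exact h1

lemma lexLt_mirror {a y : Seq} (h : lexLt (mirror a) y) : lexLt (mirror y) a := by
  obtain ⟨k, hk, hk'⟩ := h
  refine ⟨k, fun i hi => ?_, ?_⟩
  · have := hk i hi
    simp only [mirror] at this ⊢
    rw [← this, Bool.not_not]
  · revert hk'
    simp only [mirror]
    cases ha : a k <;> cases hy : y k <;> simp

/-- if 1^n 0^inf < a <= 1^{n+1} 0^inf (n >= 2), then neither 0^{n+1}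
nor 1^{n+1} occurs in any x in Sigma_a. -/
theorem statement2 (n : ℕ) (hn : 2 ≤ n) (a : Seq)
    (h1 : lexLt (wordSeq (List.replicate n true)) a)
    (h2 : lexLe a (wordSeq (List.replicate (n + 1) true))) :
    ∀ x ∈ SigmaA a, ¬ occursIn (List.replicate (n + 1) false) x ∧
      ¬ occursIn (List.replicate (n + 1) true) x := by
  intro x hx
  constructor
  · rintro ⟨i, hi⟩
    have hlt : lexLt (mirror (shift^[i] x)) (wordSeq (List.replicate (n + 1) true)) :=
      lexLt_of_lexLt_of_lexLe (lexLt_mirror (hx i).1) h2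
    obtain ⟨k, _, hk⟩ := hlt
    have hwk : wordSeq (List.replicate (n + 1) true) k = true := by
      revert hk; cases h : mirror (shift^[i] x) k <;>
        cases h' : wordSeq (List.replicate (n + 1) true) k <;> simp [h, h']
    have hklt : k < n + 1 := by
      by_contra hge
      simp only [wordSeq, List.getD_eq_getElem?_getD] at hwk
      rw [List.getElem?_eq_none (by simpa using Nat.le_of_not_lt hge)] at hwk
      simp at hwk
    have hx1 : mirror (shift^[i] x) k = false := by
      rw [hwk] at hk; revert hk; cases h : mirror (shift^[i] x) k <;> simp [h]
    have : x (i + k) = true := by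
      have := hi k (by simpa using hklt)
      simp only [mirror, shift_iterate] at hx1
      simpa using hx1
    have h0 : x (i + k) = false := by
      have := hi k (by simpa using hklt)
      simpa [List.getD_eq_getElem?_getD, List.getElem?_replicate, hklt] using this
    rw [this] at h0; simp at h0
  · rintro ⟨i, hi⟩
    have hlt : lexLt (shift^[i] x) (wordSeq (List.replicate (n + 1) true)) :=
      lexLt_of_lexLt_of_lexLe (hx i).2 h2
    obtain ⟨k, _, hk⟩ := hlt
    have hwk : wordSeq (List.replicate (n + 1) true) k = true := by
      revert hk; cases h : (shift^[i] x) k <;>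
        cases h' : wordSeq (List.replicate (n + 1) true) k <;> simp [h, h']
    have hklt : k < n + 1 := by
      by_contra hge
      simp only [wordSeq, List.getD_eq_getElem?_getD] at hwk
      rw [List.getElem?_eq_none (by simpa using Nat.le_of_not_lt hge)] at hwk
      simp at hwk
    have hx1 : (shift^[i] x) k = false := by
      rw [hwk] at hk; revert hk; cases h : (shift^[i] x) k <;> simp [h]
    rw [shift_iterate] at hx1
    have : x (i + k) = true := by
      have := hi k (by simpa using hklt)
      simpa [List.getD_eq_getElem?_getD, List.getElem?_replicate, hklt] using this
    rw [this] at hx1; simp at hx1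

end Paper
end

section
/- Let ω = w₁…w_m be a finite word over {0,1} with w₁ = 1 and w_m = 1, identified with ω0^∞ ∈ Σ₂. If v = v₁…v_k is a word in the language L(Σ_ω) with v₁ = 0, then the word 1v (the concatenation of the symbol 1 with v) also belongs to L(Σ_ω). -/
open Filter Topology

namespace Paper

lemma shift_iterate_apply (x : Seq) (n i : ℕ) : shift^[n] x i = x (n + i) := by
  induction n generalizing x i with
  | zero => simp
  | succ k ih =>
    rw [Function.iterate_succ_apply, ih (shift x) i]
    simp [shift]
    congr 1
    omega

/-- Key claim: if z lies (with all its shifts) strictly between ā and a, a(0)=1, and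
z(0)=0, then z ≺ σa. -/
lemma claimC (a z : Seq) (ha0 : a 0 = true) (hz0 : z 0 = false)
    (hb : ∀ n : ℕ, lexLt (mirror a) (shift^[n] z) ∧ lexLt (shift^[n] z) a) :
    lexLt z (shift a) := by
  by_cases ha1 : a 1 = true
  · exact ⟨0, fun i hi => absurd hi (by omega), by
      rw [hz0]; show false < shift a 0; simp [shift, ha1]⟩
  · have ha1' : a 1 = false := by
      cases h : a 1 with
      | false => rfl
      | true => exact absurd h ha1
    -- z has no "11"
    have L1 : ∀ t, z t = true → z (t + 1) = false := by
      intro t ht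
      obtain ⟨s, pre, lt⟩ := (hb t).2
      match s with
      | 0 =>
        rw [shift_iterate_apply, Nat.add_zero, ht, ha0] at lt
        exact absurd (Bool.lt_iff.mp lt).1 (by simp)
      | 1 =>
        rw [ha1'] at lt
        exact absurd (Bool.lt_iff.mp lt).2 (by simp)
      | (u + 2) =>
        have := pre 1 (by omega)
        rw [shift_iterate_apply, ha1'] at this
        exact this
    -- z has no "00"
    have L1' : ∀ t, z t = false → z (t + 1) = true := by
      intro t ht
      obtain ⟨s, pre, lt⟩ := (hb t).1
      match s with
      | 0 =>
        rw [shift_iterate_apply, Nat.add_zero, ht] at lt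
        have : mirror a 0 = false := by simp [mirror, ha0]
        rw [this] at lt
        exact absurd (Bool.lt_iff.mp lt).2 (by simp)
      | 1 =>
        have : mirror a 1 = true := by simp [mirror, ha1']
        rw [this] at lt
        exact absurd (Bool.lt_iff.mp lt).1 (by simp)
      | (u + 2) =>
        have := pre 1 (by omega)
        rw [shift_iterate_apply] at this
        have hm : mirror a 1 = true := by simp [mirror, ha1']
        rw [hm] at this
        exact this.symm
    -- hence z alternates: z t = decide (t % 2 = 1)
    have zform : ∀ t, z t = decide (t % 2 = 1) := by
      intro t
      induction t with
      | zero => simpa using hz0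
      | succ n ih =>
        cases hzn : z n with
        | false =>
          have h1 := L1' n hzn
          rw [hzn] at ih
          have : n % 2 = 0 := by
            have h2 : ¬ (n % 2 = 1) := by
              intro h
              rw [h] at ih
              simp at ih
            omega
          rw [h1]
          have : (n + 1) % 2 = 1 := by omega
          simp [this]
        | true =>
          have h1 := L1 n hzn
          rw [hzn] at ih
          have hn1 : n % 2 = 1 := by
            by_contra h
            simp at ih
            exact absurd ih h
          rw [h1]
          have : (n + 1) % 2 = 0 := by omega
          simp [this]
    -- use σz ≺ a
    obtain ⟨t, pre, lt⟩ := (hb 1).2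
    rw [shift_iterate_apply, zform (1 + t)] at lt
    have hat : a t = true := (Bool.lt_iff.mp lt).2
    have h1t : decide ((1 + t) % 2 = 1) = false := (Bool.lt_iff.mp lt).1
    have htodd : t % 2 = 1 := by
      by_contra h
      have : (1 + t) % 2 = 1 := by omega
      simp [this] at h1t
    have ht1 : 1 ≤ t := by omega
    refine ⟨t - 1, ?_, ?_⟩
    · intro i hi
      have hpre := pre (i + 1) (by omega)
      rw [shift_iterate_apply, zform (1 + (i + 1))] at hpre
      rw [zform i]
      show decide (i % 2 = 1) = a (i + 1)
      rw [← hpre]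
      simp only [decide_eq_decide]
      omega
    · rw [zform (t - 1)]
      have : (t - 1) % 2 = 0 := by omega
      simp only [this]
      show decide (0 = 1) < shift a (t - 1)
      have : shift a (t - 1) = a t := by
        show a (t - 1 + 1) = a t
        congr 1
        omega
      rw [this, hat]
      simp

/-- if v in L(Sigma_w) starts with 0, then 1v in L(Sigma_w). -/
theorem statement4 (w : List Bool) (hne : w ≠ [])
    (hfirst : w.getD 0 false = true) (hlast : w.getLast? = some true)
    (v : List Bool) (hv : v ∈ lang (SigmaA (wordSeq w)))
    (hv0 : v.getD 0 false = false) :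
    (true :: v) ∈ lang (SigmaA (wordSeq w)) := by
  obtain ⟨hvlen, x, hx, i, hocc⟩ := hv
  set a := wordSeq w with ha_def
  have ha0 : a 0 = true := by
    simpa [ha_def, wordSeq] using hfirst
  set z := shift^[i] x with hz_def
  have hzb : ∀ n : ℕ, lexLt (mirror a) (shift^[n] z) ∧ lexLt (shift^[n] z) a := by
    intro n
    have : shift^[n] z = shift^[n + i] x := by
      rw [hz_def, ← Function.iterate_add_apply]
    rw [this]
    exact hx (n + i)
  have hz0 : z 0 = false := by
    have := hocc 0 (by omega)
    rw [Nat.add_zero] at this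
    rw [hz_def, shift_iterate_apply, Nat.add_zero, this, hv0]
  have hC := claimC a z ha0 hz0 hzb
  -- the new sequence y = 1 z
  set y : Seq := fun n => if n = 0 then true else z (n - 1) with hy_def
  have hshifty : shift y = z := by
    funext j
    simp [shift, hy_def]
  have hy0 : y 0 = true := by simp [hy_def]
  have hyn : ∀ n, y (n + 1) = z n := by
    intro n
    simp [hy_def]
  have hymem : y ∈ SigmaA a := by
    intro n
    match n with
    | 0 =>
      constructor
      · exact ⟨0, fun i hi => absurd hi (by omega), by
          show mirror a 0 < y 0
          rw [hy0]
          simp [mirror, ha0]⟩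
      · obtain ⟨k, pre, lt⟩ := hC
        refine ⟨k + 1, ?_, ?_⟩
        · intro j hj
          match j with
          | 0 => simpa [hy0] using ha0.symm
          | (s + 1) =>
            have hps := pre s (by omega)
            show y (s + 1) = a (s + 1)
            rw [hyn s]
            exact hps
        · show y (k + 1) < a (k + 1)
          rw [hyn k]
          exact lt
    | (n + 1) =>
      have : shift^[n + 1] y = shift^[n] z := by
        rw [Function.iterate_succ_apply, hshifty]
      rw [this]
      exact hzb n
  refine ⟨by simp, y, hymem, 0, ?_⟩
  intro j hj
  match j with
  | 0 => simpa using hy0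
  | (s + 1) =>
    have hs : s < v.length := by simpa using hj
    have := hocc s hs
    rw [Nat.zero_add, hyn s, hz_def, shift_iterate_apply, this]
    simp

end Paper
end

section
/- Let i ≥ 0 and let ω be an i-irreducible word such that 2^{-(i+1)} < h_top(Σ_ω) < 2^{-i}. Then ℓ(ω) ≥ 3·2^i. -/
open Filter Topology

namespace Paper

-- === auxiliary ===
lemma count_one_digits_pow_add (j : ℕ) : ∀ s : ℕ, s < 2^j →
    ((Nat.digits 2 (2^j + s)).count 1) = (Nat.digits 2 s).count 1 + 1 := by
  induction j with
  | zero =>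
    intro s hs
    interval_cases s
    simp
  | succ j ih =>
    intro s hs
    have hpos : 0 < 2 ^ (j+1) + s := by positivity
    rw [Nat.digits_def' (by norm_num : 1 < 2) hpos]
    have h2 : 2 ^ (j+1) = 2 * 2 ^ j := by ring
    have hmod : (2 ^ (j+1) + s) % 2 = s % 2 := by omega
    have hdiv : (2 ^ (j+1) + s) / 2 = 2 ^ j + s / 2 := by omega
    have hlt : s / 2 < 2 ^ j := by omega
    rw [hmod, hdiv, List.count_cons, ih (s/2) hlt]
    rcases Nat.eq_zero_or_pos s with hz | hp
    · subst hz; simp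
    · rw [Nat.digits_def' (by norm_num : 1 < 2) hp, List.count_cons]
      ring

lemma thueMorse_pow_add (j s : ℕ) (hs : s < 2^j) :
    thueMorse (2^j + s) = !thueMorse s := by
  simp only [thueMorse, count_one_digits_pow_add j s hs]
  rcases Nat.mod_two_eq_zero_or_one ((Nat.digits 2 s).count 1) with h | h <;>
    simp [Nat.add_mod, h]

lemma astar_add_pow (j r : ℕ) (h : r + 1 < 2^j) : astar (2^j + r) = !astar r := by
  show thueMorse (2^j + r + 1) = !thueMorse (r+1)
  rw [Nat.add_assoc, thueMorse_pow_add j (r+1) h]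

lemma astar_pred_pow (j : ℕ) : astar (2^j - 1) = true := by
  have h1 : 0 < 2^j := by positivity
  show thueMorse (2^j - 1 + 1) = true
  have : 2^j - 1 + 1 = 2^j + 0 := by omega
  rw [this, thueMorse_pow_add j 0 h1]
  simp [thueMorse]

lemma astarWord_length (k : ℕ) : (astarWord k).length = 2^k := by
  simp [astarWord]

lemma astarWord_getD (k j : ℕ) (h : j < 2^k) :
    (astarWord k).getD j false = astar j := by
  rw [List.getD_eq_getElem?_getD]
  have : (astarWord k)[j]? = some (astar j) := by
    rw [List.getElem?_eq_getElem (by rw [astarWord_length]; exact h)]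
    simp [astarWord]
  rw [this]
  rfl

lemma triple_apply (w : List Bool) (hw : 1 < w.length) (k : ℕ) :
    triple w k = if k < w.length then w.getD k false
      else if (k - w.length) % w.length = w.length - 1 then true
      else !(w.getD ((k - w.length) % w.length) false) := by
  unfold triple
  rw [if_neg (by omega)]

lemma lower_eq (i k : ℕ) (hk : k < 3 * 2^i - 1) :
    triple (astarWord (i+1)) k = astar k := by
  have hM : 2 ≤ 2^i * 2 := by have := Nat.one_le_two_pow (n := i); omega
  have hN : (astarWord (i+1)).length = 2^i * 2 := by
    rw [astarWord_length]; ring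
  rw [triple_apply _ (by omega) k, hN]
  by_cases h1 : k < 2^i * 2
  · rw [if_pos h1, astarWord_getD _ _ (by rw [pow_succ] at *; omega)]
  · rw [if_neg h1]
    have hr : (k - 2^i * 2) % (2^i * 2) = k - 2^i * 2 :=
      Nat.mod_eq_of_lt (by omega)
    rw [hr, if_neg (by omega), astarWord_getD _ _ (by rw [pow_succ]; omega)]
    have hk2 : k = 2^(i+1) + (k - 2^i * 2) := by rw [pow_succ]; omega
    rw [show astar k = astar (2^(i+1) + (k - 2^i * 2)) from by rw [← hk2],
      astar_add_pow (i+1) _ (by rw [pow_succ]; omega)]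

lemma upper_eq (i k : ℕ) (hi : 1 ≤ i) (hk : k < 3 * 2^i - 1) :
    triple (astarWord i) k = astar k := by
  have hM : 2 ≤ 2^i := by
    calc 2 = 2^1 := rfl
    _ ≤ 2^i := Nat.pow_le_pow_right (by norm_num) hi
  rw [triple_apply _ (by rw [astarWord_length]; omega) k, astarWord_length]
  by_cases h1 : k < 2^i
  · rw [if_pos h1, astarWord_getD _ _ h1]
  · rw [if_neg h1]
    by_cases h2 : k < 2^i * 2
    · -- (k - 2^i) % 2^i = k - 2^i
      have hr : (k - 2^i) % 2^i = k - 2^i := Nat.mod_eq_of_lt (by omega)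
      rw [hr]
      by_cases h3 : k - 2^i = 2^i - 1
      · rw [if_pos h3]
        have : k = 2^(i+1) - 1 := by rw [pow_succ]; omega
        rw [this, astar_pred_pow]
      · rw [if_neg h3, astarWord_getD _ _ (by omega)]
        have hk2 : k = 2^i + (k - 2^i) := by omega
        rw [show astar k = astar (2^i + (k - 2^i)) from by rw [← hk2],
          astar_add_pow i _ (by omega)]
    · -- 2^i*2 ≤ k < 3*2^i - 1
      have hr : (k - 2^i) % 2^i = k - 2^i * 2 := by
        have h4 : k - 2^i = 2^i + (k - 2^i * 2) := by omega
        rw [h4, Nat.add_mod_left]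
        exact Nat.mod_eq_of_lt (by omega)
      rw [hr, if_neg (by omega), astarWord_getD _ _ (by omega)]
      have hk2 : k = 2^(i+1) + (k - 2^i * 2) := by rw [pow_succ]; omega
      rw [show astar k = astar (2^(i+1) + (k - 2^i * 2)) from by rw [← hk2],
        astar_add_pow (i+1) _ (by rw [pow_succ]; omega)]

lemma lexLt_asymm {x y : Seq} (h1 : lexLt x y) (h2 : lexLt y x) : False := by
  obtain ⟨k1, a1, l1⟩ := h1
  obtain ⟨k2, a2, l2⟩ := h2
  rcases lt_trichotomy k1 k2 with h | h | h
  · rw [a2 k1 h] at l1; exact absurd l1 (lt_irrefl _)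
  · subst h; exact absurd (l1.trans l2) (lt_irrefl _)
  · rw [a1 k2 h] at l2; exact absurd l2 (lt_irrefl _)

lemma bool_lt_iff {x y : Bool} : x < y ↔ x = false ∧ y = true := by
  cases x <;> cases y <;> simp [Bool.lt_iff]

lemma wordSeq_true_lt {w : List Bool} {k : ℕ} (h : wordSeq w k = true) :
    k < w.length := by
  by_contra hc
  rw [wordSeq, List.getD_eq_default _ _ (by omega)] at h
  exact absurd h (by simp)


theorem main_len (i : ℕ) (w : List Bool) (hseq : IsISequence i (wordSeq w)) :
    3 * 2 ^ i ≤ w.length := by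
  by_contra hcon
  push_neg at hcon
  by_cases hi : i = 0
  · subst hi
    rw [IsISequence, if_pos rfl] at hseq
    obtain ⟨⟨k, hagr, hk⟩, -⟩ := hseq
    rw [bool_lt_iff] at hk
    obtain ⟨hk0, hk1⟩ := hk
    have hklen : k < w.length := wordSeq_true_lt hk1
    have hk2 : k < 3 * 2^0 - 1 := by omega
    rw [lower_eq 0 k hk2] at hk0
    interval_cases k
    · rw [show (0:ℕ) = 2^0 - 1 from rfl, astar_pred_pow] at hk0; simp at hk0
    · rw [show (1:ℕ) = 2^1 - 1 from rfl, astar_pred_pow] at hk0; simp at hk0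
  · rw [IsISequence, if_neg hi] at hseq
    obtain ⟨⟨k, hagr, hk⟩, hup⟩ := hseq
    rw [bool_lt_iff] at hk
    obtain ⟨hk0, hk1⟩ := hk
    have hklen : k < w.length := wordSeq_true_lt hk1
    have hkd : k < 3 * 2^i - 1 := by
      have : 1 ≤ 2^i := Nat.one_le_two_pow
      omega
    have hi1 : 1 ≤ i := by omega
    have hUlt : lexLt (triple (astarWord i)) (wordSeq w) := by
      refine ⟨k, fun j hj => ?_, ?_⟩
      · rw [upper_eq i j hi1 (by omega), ← lower_eq i j (by omega)]
        exact hagr j hj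
      · rw [bool_lt_iff]
        exact ⟨by rw [upper_eq i k hi1 hkd, ← lower_eq i k hkd]; exact hk0, hk1⟩
    rcases hup with hlt | heq
    · exact lexLt_asymm hlt hUlt
    · have := congrFun heq k
      rw [upper_eq i k hi1 hkd, ← lower_eq i k hkd, hk0] at this
      rw [this] at hk1
      simp at hk1


/-- an i-irreducible word whose subshift has entropy strictly between
2^{-(i+1)} and 2^{-i} has length at least 3 * 2^i. -/
theorem statement8 (i : ℕ) (w : List Bool) (h : IIrreducible i w)
    (h1 : (1 : ℝ) / 2 ^ (i + 1) < htop (SigmaA (wordSeq w)))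
    (h2 : htop (SigmaA (wordSeq w)) < (1 : ℝ) / 2 ^ i) :
    3 * 2 ^ i ≤ w.length :=
  main_len i w h.2.2.1

end Paper
end
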